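/- Let 1 < p, q < ∞ with 1/p + 1/q ≥ 1. Let X and Y be Banach spaces with unconditional finite-dimensional Schauder decompositions {X_i}_{i∈I} and {Y_j}_{j∈J} having a disjoint lower p-estimate and a disjoint lower q-estimate, respectively. Let W₁ ⊆ X and W₂ ⊆ Y be sets such that W₁ ⊗ W₂ := {x ⊗ y : x ∈ W₁, y ∈ W₂} is conditionally weakly compact in X ⊗π Y. Then either W₁ is relatively norm compact in X or W₂ is relatively norm compact in Y. -/

import Mathlib

/-!
Suppose neither `W₁` nor `W₂` is relatively compact. Each then contains a separated sequence, which
may be taken weakly Cauchy: tensoring with a fixed nonzero vector of the other set transfers the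
conditional weak compactness of `W₁ ⊗ W₂` to each factor. The consecutive differences `D n`, `E n`
are weakly null and bounded below. Since the decompositions are finite dimensional, weakly null
sequences are norm null on every finite block, and a gliding hump produces disjointly supported
blocks `F k`, `G k` with functionals `f k`, `g k` such that `f k (D k)`, `g k (E k)` are bounded
below while the off-diagonal values `f k (D j)`, `g k (E j)` are summably small. The disjoint lower
`p`- and `q`-estimates and Hölder's inequality (this is where `1/p + 1/q ≥ 1` enters) make
`B = ∑ₖ (-1)ᵏ f k ⊗ g k` a bounded bilinear form, i.e. a functional on `X ⊗π Y`. Each `D n ⊗ E n`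
is a combination of four elementary tensors from `W₁ ⊗ W₂`, so along a subsequence `B (D n) (E n)`
converges; but it equals `(-1)ⁿ f n (D n) g n (E n)` up to a small error, a contradiction.
-/

open Filter Topology Pointwise MeasureTheory
open scoped ENNReal

/-- A set is weakly compact if its image in the weak space is compact. -/
def WeaklyCompact {Z : Type*} [NormedAddCommGroup Z] [NormedSpace ℝ Z] (K : Set Z) : Prop :=
  IsCompact (toWeakSpace ℝ Z '' K)

/-- A set is relatively weakly compact if the weak closure of its image in the weak space
is compact. -/
def RelWeaklyCompact {Z : Type*} [NormedAddCommGroup Z] [NormedSpace ℝ Z] (K : Set Z) : Prop :=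
  IsCompact (closure (toWeakSpace ℝ Z '' K))

/-- A set is conditionally weakly compact (weakly precompact) if every sequence in it has a
weakly Cauchy subsequence. -/
def CondWeaklyCompact {Z : Type*} [NormedAddCommGroup Z] [NormedSpace ℝ Z] (D : Set Z) : Prop :=
  ∀ u : ℕ → Z, (∀ n, u n ∈ D) → ∃ φ : ℕ → ℕ, StrictMono φ ∧
    ∀ f : Z →L[ℝ] ℝ, ∃ l : ℝ, Tendsto (fun n => f (u (φ n))) atTop (nhds l)

/-- `Z` is strongly weakly compactly generated by the weakly compact set `G`. -/
def SWCGBy {Z : Type*} [NormedAddCommGroup Z] [NormedSpace ℝ Z] (G : Set Z) : Prop :=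
  WeaklyCompact G ∧ ∀ K : Set Z, WeaklyCompact K → ∀ ε : ℝ, 0 < ε →
    ∃ n : ℕ, K ⊆ (n : ℝ) • G + Metric.closedBall (0 : Z) ε

/-- A Banach space is strongly weakly compactly generated. -/
def IsSWCG (Z : Type*) [NormedAddCommGroup Z] [NormedSpace ℝ Z] : Prop :=
  ∃ G : Set Z, SWCGBy G

/-- A Banach space is strongly conditionally weakly compactly generated. -/
def IsSCWCG (Z : Type*) [NormedAddCommGroup Z] [NormedSpace ℝ Z] : Prop :=
  ∃ G : Set Z, CondWeaklyCompact G ∧ ∀ C : Set Z, CondWeaklyCompact C → ∀ ε : ℝ, 0 < ε →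
    ∃ n : ℕ, C ⊆ (n : ℝ) • G + Metric.closedBall (0 : Z) ε

/-- A Banach space is weakly sequentially complete if every weakly Cauchy sequence is weakly
convergent. -/
def WeaklySeqComplete (Z : Type*) [NormedAddCommGroup Z] [NormedSpace ℝ Z] : Prop :=
  ∀ u : ℕ → Z, (∀ f : Z →L[ℝ] ℝ, ∃ l : ℝ, Tendsto (fun n => f (u n)) atTop (nhds l)) →
    ∃ z : Z, ∀ f : Z →L[ℝ] ℝ, Tendsto (fun n => f (u n)) atTop (nhds (f z))

/-- A Banach space has the Schur property if weakly convergent sequences are norm convergent. -/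
def SchurProperty (Z : Type*) [NormedAddCommGroup Z] [NormedSpace ℝ Z] : Prop :=
  ∀ u : ℕ → Z, ∀ z : Z,
    (∀ f : Z →L[ℝ] ℝ, Tendsto (fun n => f (u n)) atTop (nhds (f z))) →
      Tendsto u atTop (nhds z)

/-- `Z`, together with the continuous bilinear map `t`, is (a realization of) the projective
tensor product `X ⊗π Y`: the elementary tensors span a dense subspace, on that subspace the
norm is the projective norm, and every bilinear functional of norm at most one induces a
functional on `Z` of norm at most one. -/
def IsProjTensorProduct {X Y Z : Type*} [NormedAddCommGroup X] [NormedSpace ℝ X]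
    [NormedAddCommGroup Y] [NormedSpace ℝ Y] [NormedAddCommGroup Z] [NormedSpace ℝ Z]
    (t : X →L[ℝ] Y →L[ℝ] Z) : Prop :=
  Dense ((Submodule.span ℝ {z : Z | ∃ x y, z = t x y} : Submodule ℝ Z) : Set Z) ∧
  (∀ z : Z, z ∈ Submodule.span ℝ {z : Z | ∃ x y, z = t x y} →
    ‖z‖ = sInf {r : ℝ | ∃ (n : ℕ) (x : Fin n → X) (y : Fin n → Y),
      z = ∑ i, t (x i) (y i) ∧ r = ∑ i, ‖x i‖ * ‖y i‖}) ∧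
  (∀ B : X →L[ℝ] Y →L[ℝ] ℝ, ‖B‖ ≤ 1 →
    ∃ φ : Z →L[ℝ] ℝ, ‖φ‖ ≤ 1 ∧ ∀ x y, φ (t x y) = B x y)

/-- An unconditional Schauder decomposition of `X` indexed by `I`, given by its family of
projections `proj C` for `C ⊆ I`: each `proj C x` is the unconditional sum of the coordinate
projections `proj {i} x`, `i ∈ C`, the coordinate projections are pairwise disjoint idempotents
and they sum to the identity. -/
structure SchauderDecomp (I : Type*) (X : Type*) [NormedAddCommGroup X]
    [NormedSpace ℝ X] where
  proj : Set I → (X →L[ℝ] X)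
  hasSum_proj : ∀ (C : Set I) (x : X), HasSum (fun i : C => proj {(i : I)} x) (proj C x)
  proj_univ : ∀ x, proj Set.univ x = x
  proj_idem : ∀ i : I, ∀ x, proj {i} (proj {i} x) = proj {i} x
  proj_disjoint : ∀ i j : I, i ≠ j → ∀ x, proj {i} (proj {j} x) = 0

/-- The decomposition is finite dimensional if each coordinate subspace is finite dimensional. -/
def SchauderDecomp.FinDim {I X : Type*} [NormedAddCommGroup X] [NormedSpace ℝ X]
    (d : SchauderDecomp I X) : Prop :=
  ∀ i : I, FiniteDimensional ℝ (LinearMap.range ((d.proj {i}) : X →ₗ[ℝ] X))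

/-- The decomposition has a disjoint lower `p`-estimate. -/
def SchauderDecomp.DisjLowerEstimate {I X : Type*} [NormedAddCommGroup X] [NormedSpace ℝ X]
    (d : SchauderDecomp I X) (p : ℝ) : Prop :=
  ∃ c : ℝ, 0 < c ∧ ∀ (r : ℕ) (C : Fin r → Set I), (∀ k, (C k).Finite) →
    (Pairwise fun k l => Disjoint (C k) (C l)) →
    ∀ x : X, (∑ k, ‖d.proj (C k) x‖ ^ p) ^ (1 / p) ≤ c * ‖x‖

lemma exists_mem_ne_of_not_totallyBounded {α : Type*} [UniformSpace α] {W : Set α}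
    (hW : ¬TotallyBounded W) (x : α) : ∃ y ∈ W, y ≠ x := by
  by_contra! h
  exact hW ((Set.finite_singleton x).totallyBounded.subset h)

lemma exists_seq_le_dist_of_not_totallyBounded {α : Type*} [PseudoMetricSpace α] {W : Set α}
    (hW : ¬TotallyBounded W) :
    ∃ ε > 0, ∃ a : ℕ → α, (∀ n, a n ∈ W) ∧ ∀ m n, m < n → ε ≤ dist (a m) (a n) := by
  rw [Metric.totallyBounded_iff] at hW
  push Not at hW
  obtain ⟨ε, hε, hcover⟩ := hW
  obtain ⟨a, haW, ha⟩ := exists_seq_of_forall_finset_exists (· ∈ W) (fun x y => ε ≤ dist x y)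
    fun s _ => by
      obtain ⟨y, hyW, hy⟩ := Set.not_subset.1 (hcover s s.finite_toSet)
      simp only [Set.mem_iUnion, Metric.mem_ball, not_exists, not_lt] at hy
      exact ⟨y, hyW, fun x hx => dist_comm y x ▸ hy x hx⟩
  exact ⟨ε, hε, a, haW, ha⟩

section WeakSequences

variable {X Z : Type*} [NormedAddCommGroup X] [NormedSpace ℝ X]
  [NormedAddCommGroup Z] [NormedSpace ℝ Z]

def IsWeaklyCauchy (u : ℕ → Z) : Prop :=
  ∀ f : Z →L[ℝ] ℝ, ∃ l, Tendsto (fun n => f (u n)) atTop (𝓝 l)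

lemma IsWeaklyCauchy.comp_tendsto {u : ℕ → Z} (hu : IsWeaklyCauchy u) {φ : ℕ → ℕ}
    (hφ : Tendsto φ atTop atTop) : IsWeaklyCauchy (u ∘ φ) := fun f =>
  (hu f).imp fun _ hl => hl.comp hφ

lemma IsWeaklyCauchy.add {u v : ℕ → Z} (hu : IsWeaklyCauchy u) (hv : IsWeaklyCauchy v) :
    IsWeaklyCauchy (u + v) := fun f => by
  obtain ⟨l, hl⟩ := hu f
  obtain ⟨m, hm⟩ := hv f
  exact ⟨l + m, by simpa using hl.add hm⟩

lemma IsWeaklyCauchy.neg {u : ℕ → Z} (hu : IsWeaklyCauchy u) : IsWeaklyCauchy (-u) := fun f => by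
  obtain ⟨l, hl⟩ := hu f
  exact ⟨-l, by simpa using hl.neg⟩

lemma IsWeaklyCauchy.tendsto_sub_succ {u : ℕ → Z} (hu : IsWeaklyCauchy u) (f : Z →L[ℝ] ℝ) :
    Tendsto (fun n => f (u (n + 1) - u n)) atTop (𝓝 0) := by
  obtain ⟨l, hl⟩ := hu f
  simpa using (hl.comp (tendsto_add_atTop_nat 1)).sub hl

lemma CondWeaklyCompact.add {A B : Set Z} (hA : CondWeaklyCompact A)
    (hB : CondWeaklyCompact B) : CondWeaklyCompact (A + B) := by
  intro u hu
  choose v hv w hw hvw using hu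
  obtain ⟨φ, hφ, hvφ⟩ := hA v hv
  obtain ⟨ψ, hψ, hwψ⟩ := hB (w ∘ φ) fun n => hw _
  refine ⟨φ ∘ ψ, hφ.comp hψ, ?_⟩
  have hu : u ∘ (φ ∘ ψ) = (v ∘ φ) ∘ ψ + (w ∘ φ) ∘ ψ := funext fun n => (hvw _).symm
  change IsWeaklyCauchy (u ∘ (φ ∘ ψ))
  rw [hu]
  exact (IsWeaklyCauchy.comp_tendsto hvφ hψ.tendsto_atTop).add hwψ

lemma CondWeaklyCompact.neg {A : Set Z} (hA : CondWeaklyCompact A) :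
    CondWeaklyCompact (-A) := by
  intro u hu
  obtain ⟨φ, hφ, hu'⟩ := hA (-u) hu
  have hu : u ∘ φ = -((-u) ∘ φ) := by ext; simp
  refine ⟨φ, hφ, ?_⟩
  change IsWeaklyCauchy (u ∘ φ)
  rw [hu]
  exact IsWeaklyCauchy.neg hu'

lemma CondWeaklyCompact.sub {A B : Set Z} (hA : CondWeaklyCompact A)
    (hB : CondWeaklyCompact B) : CondWeaklyCompact (A - B) := by
  rw [sub_eq_add_neg]
  exact hA.add hB.neg

lemma CondWeaklyCompact.of_mapsTo {T : X →L[ℝ] Z}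
    (hT : ∀ f : X →L[ℝ] ℝ, ∃ φ : Z →L[ℝ] ℝ, ∀ x, φ (T x) = f x) {W : Set X} {S : Set Z}
    (hS : CondWeaklyCompact S) (hWS : Set.MapsTo T W S) : CondWeaklyCompact W := by
  intro u hu
  obtain ⟨θ, hθ, hTu⟩ := hS (T ∘ u) fun n => hWS (hu n)
  refine ⟨θ, hθ, fun f => ?_⟩
  obtain ⟨φ, hφ⟩ := hT f
  simpa only [Function.comp_apply, hφ] using hTu φ

lemma CondWeaklyCompact.exists_isWeaklyCauchy_le_norm_sub_succ {W : Set X}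
    (hW : CondWeaklyCompact W) (hW' : ¬TotallyBounded W) : ∃ ε > 0, ∃ a : ℕ → X, (∀ n, a n ∈ W) ∧ IsWeaklyCauchy a ∧
      ∀ n, ε ≤ ‖a (n + 1) - a n‖ := by
  obtain ⟨ε, hε, a, haW, ha⟩ := exists_seq_le_dist_of_not_totallyBounded hW'
  obtain ⟨θ, hθ, hθa⟩ := hW a haW
  refine ⟨ε, hε, a ∘ θ, fun n => haW _, hθa, fun n => ?_⟩
  rw [← dist_eq_norm, dist_comm]
  exact ha _ _ (hθ n.lt_succ_self)

end WeakSequences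

lemma tendsto_zero_of_forall_dual_tendsto_zero {V ι : Type*} [NormedAddCommGroup V]
    [NormedSpace ℝ V] [FiniteDimensional ℝ V] {l : Filter ι} {v : ι → V}
    (hv : ∀ f : V →L[ℝ] ℝ, Tendsto (fun i => f (v i)) l (𝓝 0)) : Tendsto v l (𝓝 0) := by
  let b := Module.finBasis ℝ V
  have hcoord : Tendsto (fun i => b.equivFunL (v i)) l (𝓝 0) :=
    tendsto_pi_nhds.2 fun j => by simpa using hv (LinearMap.toContinuousLinearMap (b.coord j))
  simpa [Function.comp_def] using (b.equivFunL.symm.continuous.tendsto 0).comp hcoord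

lemma ContinuousLinearMap.tendsto_zero_of_weaklyNull {X V ι : Type*} [NormedAddCommGroup X]
    [NormedSpace ℝ X] [NormedAddCommGroup V] [NormedSpace ℝ V] (T : X →L[ℝ] V)
    [FiniteDimensional ℝ (LinearMap.range (T : X →ₗ[ℝ] V))] {l : Filter ι} {D : ι → X}
    (hD : ∀ f : X →L[ℝ] ℝ, Tendsto (fun i => f (D i)) l (𝓝 0)) :
    Tendsto (fun i => T (D i)) l (𝓝 0) := by
  let T' := T.codRestrict (LinearMap.range (T : X →ₗ[ℝ] V)) fun x => LinearMap.mem_range_self _ x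
  have hT' := tendsto_zero_of_forall_dual_tendsto_zero (v := fun i => T' (D i))
    fun f => hD (f.comp T')
  exact (continuous_subtype_val.tendsto 0).comp hT'

lemma exists_dual_abs_le_norm_apply {X V : Type*} [NormedAddCommGroup X] [NormedSpace ℝ X]
    [NormedAddCommGroup V] [NormedSpace ℝ V] (T : X →L[ℝ] V) (x : X) :
    ∃ f : X →L[ℝ] ℝ, (∀ y, |f y| ≤ ‖T y‖) ∧ f x = ‖T x‖ := by
  obtain ⟨g, hg, hgx⟩ := exists_dual_vector'' ℝ (T x)
  refine ⟨g.comp T, fun y => ?_, hgx⟩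
  simpa using (g.le_opNorm (T y)).trans (mul_le_of_le_one_left (norm_nonneg _) hg)

lemma antitone_div_two_pow {η : ℝ} (hη : 0 ≤ η) : Antitone fun n : ℕ => η / 2 ^ n :=
  fun _ _ h => div_le_div_of_nonneg_left hη (by positivity) (pow_le_pow_right₀ one_le_two h)

namespace SchauderDecomp

variable {I X : Type*} [NormedAddCommGroup X] [NormedSpace ℝ X] (d : SchauderDecomp I X)

lemma proj_finset (s : Finset I) (x : X) : d.proj s x = ∑ i ∈ s, d.proj {i} x :=
  (d.hasSum_proj s x).unique (by rw [← Finset.sum_coe_sort]; exact hasSum_fintype _)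

lemma hasSum_proj_singleton (x : X) : HasSum (fun i => d.proj {i} x) x := by
  have h := (Equiv.Set.univ I).hasSum_iff (f := fun i => d.proj {i} x) |>.1
    (d.hasSum_proj Set.univ x)
  rwa [d.proj_univ] at h

lemma exists_finset_vanishing (x : X) {δ : ℝ} (hδ : 0 < δ) :
    ∃ s : Finset I, ∀ t : Finset I, Disjoint t s → ‖d.proj t x‖ < δ := by
  obtain ⟨s, hs⟩ := (d.hasSum_proj_singleton x).summable.vanishing (Metric.ball_mem_nhds 0 hδ)
  exact ⟨s, fun t ht => by simpa [d.proj_finset] using hs t ht⟩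

lemma exists_finset_disjoint_lt_norm_proj (E : Finset I) (x : X) {δ : ℝ} (hδ : 0 < δ) :
    ∃ F : Finset I, Disjoint F E ∧ ‖x - d.proj E x‖ - δ < ‖d.proj F x‖ := by
  classical
  obtain ⟨u, hu⟩ := eventually_atTop.1
    ((d.hasSum_proj_singleton x).eventually (Metric.ball_mem_nhds x hδ))
  refine ⟨(u ∪ E) \ E, Finset.sdiff_disjoint, ?_⟩
  have hsplit : d.proj ↑((u ∪ E) \ E) x = ∑ i ∈ u ∪ E, d.proj {i} x - d.proj E x := by
    rw [d.proj_finset, d.proj_finset, ← Finset.sum_sdiff Finset.subset_union_right,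
      add_sub_cancel_right]
  have hclose : ‖x - ∑ i ∈ u ∪ E, d.proj {i} x‖ < δ := by
    rw [norm_sub_rev, ← dist_eq_norm]
    exact hu _ Finset.subset_union_left
  calc ‖x - d.proj E x‖ - δ
      ≤ ‖x - ∑ i ∈ u ∪ E, d.proj {i} x‖ + ‖d.proj ↑((u ∪ E) \ E) x‖ - δ := by
        rw [hsplit]
        gcongr
        exact norm_sub_le_norm_sub_add_norm_sub _ _ _
    _ < ‖d.proj ↑((u ∪ E) \ E) x‖ := by linarith

lemma finiteDimensional_range_proj (hfd : d.FinDim) (s : Finset I) :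
    FiniteDimensional ℝ (LinearMap.range (d.proj s : X →ₗ[ℝ] X)) := by
  have : ∀ i, FiniteDimensional ℝ (LinearMap.range (d.proj {i} : X →ₗ[ℝ] X)) := hfd
  refine Submodule.finiteDimensional_of_le (S₂ := s.sup fun i => LinearMap.range
    (d.proj {i} : X →ₗ[ℝ] X)) ?_
  rintro _ ⟨x, rfl⟩
  rw [ContinuousLinearMap.coe_coe, d.proj_finset]
  exact Submodule.sum_mem _ fun i hi => Finset.le_sup (f := fun i => LinearMap.range
    (d.proj {i} : X →ₗ[ℝ] X)) hi (LinearMap.mem_range_self _ x)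

lemma tendsto_proj_of_weaklyNull (hfd : d.FinDim) (s : Finset I) {D : ℕ → X}
    (hD : ∀ f : X →L[ℝ] ℝ, Tendsto (fun n => f (D n)) atTop (𝓝 0)) :
    Tendsto (fun n => d.proj s (D n)) atTop (𝓝 0) :=
  have := d.finiteDimensional_range_proj hfd s
  (d.proj s).tendsto_zero_of_weaklyNull hD

structure IsGlidingHump (ε η : ℝ) (D : ℕ → X) (F : ℕ → Finset I) (f : ℕ → X →L[ℝ] ℝ) :
    Prop where
  pairwise_disjoint : Pairwise fun k l => Disjoint (F k) (F l)
  abs_apply_le : ∀ k x, |f k x| ≤ ‖d.proj (F k) x‖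
  le_apply_self : ∀ k, ε ≤ f k (D k)
  abs_apply_le_of_ne : ∀ j k, j ≠ k → |f k (D j)| ≤ η / 2 ^ k

variable {d}

lemma IsGlidingHump.comp {ε η : ℝ} {D : ℕ → X} {F : ℕ → Finset I} {f : ℕ → X →L[ℝ] ℝ}
    (h : d.IsGlidingHump ε η D F f) (hη : 0 ≤ η) {ψ : ℕ → ℕ} (hψ : StrictMono ψ) :
    d.IsGlidingHump ε η (D ∘ ψ) (F ∘ ψ) (f ∘ ψ) where
  pairwise_disjoint _ _ hkl := h.pairwise_disjoint (hψ.injective.ne hkl)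
  abs_apply_le k := h.abs_apply_le (ψ k)
  le_apply_self k := h.le_apply_self (ψ k)
  abs_apply_le_of_ne _ k hjk := (h.abs_apply_le_of_ne _ _ (hψ.injective.ne hjk)).trans
    (antitone_div_two_pow hη (hψ.id_le k))

lemma exists_hump_compatible (hfd : d.FinDim) {D : ℕ → X}
    (hD : ∀ f : X →L[ℝ] ℝ, Tendsto (fun n => f (D n)) atTop (𝓝 0)) {ε : ℝ} (hε : 0 < ε)
    (hDε : ∀ n, ε ≤ ‖D n‖) {δ : ℝ} (hδ : 0 < δ) (s : Finset (ℕ × Finset I)) :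
    ∃ (n : ℕ) (F : Finset I), ε / 2 ≤ ‖d.proj F (D n)‖ ∧ ∀ mG ∈ s, Disjoint mG.2 F ∧
      ‖d.proj F (D mG.1)‖ ≤ δ ∧ ‖d.proj mG.2 (D n)‖ ≤ δ := by
  classical
  choose V hV using fun m => d.exists_finset_vanishing (D m) hδ
  set E : Finset I := s.biUnion fun mG => V mG.1 ∪ mG.2
  have hsub : ∀ mG ∈ s, V mG.1 ∪ mG.2 ⊆ E := fun mG h =>
    Finset.subset_biUnion_of_mem (fun mG => V mG.1 ∪ mG.2) h
  have hnull : ∀ G : Finset I, Tendsto (fun n => ‖d.proj G (D n)‖) atTop (𝓝 0) := fun G =>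
    tendsto_zero_iff_norm_tendsto_zero.1 (d.tendsto_proj_of_weaklyNull hfd G hD)
  obtain ⟨n, hn, hEn⟩ := (((eventually_all_finset s).2 fun mG _ =>
    (hnull mG.2).eventually_lt_const hδ).and
    ((hnull E).eventually_lt_const (by positivity : 0 < ε / 4))).exists
  obtain ⟨F, hFE, hF⟩ := d.exists_finset_disjoint_lt_norm_proj E (D n) (by positivity : 0 < ε / 4)
  refine ⟨n, F, ?_, fun mG hmG => ⟨?_, ?_, (hn mG hmG).le⟩⟩
  · linarith [hDε n, norm_sub_norm_le (D n) (d.proj E (D n))]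
  · exact (hFE.mono_right (Finset.subset_union_right.trans (hsub mG hmG))).symm
  · exact (hV _ F (hFE.mono_right (Finset.subset_union_left.trans (hsub mG hmG)))).le

lemma exists_isGlidingHump (hfd : d.FinDim) {D : ℕ → X}
    (hD : ∀ f : X →L[ℝ] ℝ, Tendsto (fun n => f (D n)) atTop (𝓝 0)) {ε : ℝ} (hε : 0 < ε)
    (hDε : ∀ n, ε ≤ ‖D n‖) {η : ℝ} (hη : 0 < η) :
    ∃ σ : ℕ → ℕ, ∃ F f, d.IsGlidingHump (ε / 2) η (D ∘ σ) F f := by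
  -- A hump `(ℓ, n, F)` carries a level `ℓ`: its tolerance `η / 2 ^ ℓ` towards the earlier humps
  -- has to be fixed before `n` and `F` are chosen.
  obtain ⟨b, hbP, hb⟩ := exists_seq_of_forall_finset_exists
    (fun b : ℕ × ℕ × Finset I => ε / 2 ≤ ‖d.proj b.2.2 (D b.2.1)‖)
    (fun b b' => b.1 < b'.1 ∧ Disjoint b.2.2 b'.2.2 ∧
      ‖d.proj b'.2.2 (D b.2.1)‖ ≤ η / 2 ^ b'.1 ∧ ‖d.proj b.2.2 (D b'.2.1)‖ ≤ η / 2 ^ b'.1)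
    fun s _ => by
      classical
      obtain ⟨n, F, hF, hs⟩ := exists_hump_compatible hfd hD hε hDε
        (by positivity : 0 < η / 2 ^ (s.sup Prod.fst + 1)) (s.image Prod.snd)
      exact ⟨(s.sup Prod.fst + 1, n, F), hF, fun b hb =>
        ⟨Nat.lt_succ_of_le (Finset.le_sup hb), hs b.2 (Finset.mem_image_of_mem _ hb)⟩⟩
  have hℓ : StrictMono fun k => (b k).1 := fun m n h => (hb m n h).1
  have htol : ∀ k, η / 2 ^ (b k).1 ≤ η / 2 ^ k := fun k =>
    antitone_div_two_pow hη.le (hℓ.id_le k)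
  choose f hf hfD using fun k => exists_dual_abs_le_norm_apply (d.proj (b k).2.2) (D (b k).2.1)
  refine ⟨fun k => (b k).2.1, fun k => (b k).2.2, f,
    ⟨fun k l hkl => ?_, hf, fun k => (hfD k).symm ▸ hbP k, fun j k hjk => (hf k _).trans ?_⟩⟩
  · rcases hkl.lt_or_gt with h | h
    exacts [(hb k l h).2.1, (hb l k h).2.1.symm]
  · rcases hjk.lt_or_gt with h | h
    · exact (hb j k h).2.2.1.trans (htol k)
    · exact (hb k j h).2.2.2.trans ((htol j).trans (antitone_div_two_pow hη.le h.le))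

end SchauderDecomp

lemma Real.Lp_le_Lq_of_le {ι : Type*} (s : Finset ι) {u : ι → ℝ} (hu : ∀ i ∈ s, 0 ≤ u i)
    {p q : ℝ} (hq : 0 < q) (hqp : q ≤ p) :
    (∑ i ∈ s, u i ^ p) ^ (1 / p) ≤ (∑ i ∈ s, u i ^ q) ^ (1 / q) := by
  have hp : 0 < p := hq.trans_le hqp
  set A := (∑ i ∈ s, u i ^ q) ^ (1 / q)
  have hsum_q : 0 ≤ ∑ i ∈ s, u i ^ q := Finset.sum_nonneg fun i hi => Real.rpow_nonneg (hu i hi) q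
  have hA : 0 ≤ A := Real.rpow_nonneg hsum_q _
  have hAq : A ^ q = ∑ i ∈ s, u i ^ q := by
    simp only [A, one_div]
    exact Real.rpow_inv_rpow hsum_q hq.ne'
  have hle : ∀ i ∈ s, u i ≤ A := fun i hi => by
    rw [← Real.rpow_le_rpow_iff (hu i hi) hA hq, hAq]
    exact Finset.single_le_sum (fun j hj => Real.rpow_nonneg (hu j hj) q) hi
  have hsum : ∑ i ∈ s, u i ^ p ≤ A ^ p :=
    calc ∑ i ∈ s, u i ^ p = ∑ i ∈ s, u i ^ q * u i ^ (p - q) :=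
          Finset.sum_congr rfl fun i hi => by
            rw [← Real.rpow_add' (hu i hi) (by linarith), add_sub_cancel]
      _ ≤ ∑ i ∈ s, u i ^ q * A ^ (p - q) := Finset.sum_le_sum fun i hi =>
          mul_le_mul_of_nonneg_left (Real.rpow_le_rpow (hu i hi) (hle i hi) (by linarith))
            (Real.rpow_nonneg (hu i hi) q)
      _ = A ^ p := by
          rw [← Finset.sum_mul, ← hAq, ← Real.rpow_add' hA (by linarith), add_sub_cancel]
  calc (∑ i ∈ s, u i ^ p) ^ (1 / p) ≤ (A ^ p) ^ (1 / p) :=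
        Real.rpow_le_rpow (Finset.sum_nonneg fun i hi => Real.rpow_nonneg (hu i hi) p) hsum
          (by positivity)
    _ = A := by rw [one_div, Real.rpow_rpow_inv hA hp.ne']

lemma SchauderDecomp.DisjLowerEstimate.exists_sum_range_le {I X : Type*}
    [NormedAddCommGroup X] [NormedSpace ℝ X] {d : SchauderDecomp I X} {p : ℝ}
    (h : d.DisjLowerEstimate p) :
    ∃ c, ∀ F : ℕ → Finset I, (Pairwise fun k l => Disjoint (F k) (F l)) → ∀ x r, (∑ k ∈ Finset.range r, ‖d.proj (F k) x‖ ^ p) ^ (1 / p) ≤ c * ‖x‖ := by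
  obtain ⟨c, -, hc⟩ := h
  refine ⟨c, fun F hF x r => ?_⟩
  simpa [Fin.sum_univ_eq_sum_range (fun k => ‖d.proj (F k) x‖ ^ p)] using
    hc r (fun k => F k) (fun _ => Finset.finite_toSet _)
      (fun k l hkl => Finset.disjoint_coe.2 (hF (Fin.val_injective.ne hkl))) x

lemma exists_sum_range_norm_proj_mul_le {I J X Y : Type*} [NormedAddCommGroup X]
    [NormedSpace ℝ X] [NormedAddCommGroup Y] [NormedSpace ℝ Y] {p q : ℝ} (hp : 1 < p)
    (hq : 1 < q) (hpq : 1 ≤ 1 / p + 1 / q) {dX : SchauderDecomp I X} {dY : SchauderDecomp J Y}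
    (hpX : dX.DisjLowerEstimate p) (hqY : dY.DisjLowerEstimate q) :
    ∃ K, ∀ (F : ℕ → Finset I) (G : ℕ → Finset J), (Pairwise fun k l => Disjoint (F k) (F l)) →
      (Pairwise fun k l => Disjoint (G k) (G l)) → ∀ x y r,
        ∑ k ∈ Finset.range r, ‖dX.proj (F k) x‖ * ‖dY.proj (G k) y‖ ≤ K * ‖x‖ * ‖y‖ := by
  obtain ⟨cX, hcX⟩ := hpX.exists_sum_range_le
  obtain ⟨cY, hcY⟩ := hqY.exists_sum_range_le
  have hconj : p.HolderConjugate (p / (p - 1)) := .conjExponent hp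
  have hqp' : q ≤ p / (p - 1) := by
    have := hconj.inv_add_inv_eq_one
    rw [← inv_le_inv₀ hconj.symm.pos (by linarith)]
    rw [one_div, one_div] at hpq
    linarith
  refine ⟨cX * cY, fun F G hF hG x y r => ?_⟩
  calc ∑ k ∈ Finset.range r, ‖dX.proj (F k) x‖ * ‖dY.proj (G k) y‖
      ≤ (∑ k ∈ Finset.range r, ‖dX.proj (F k) x‖ ^ p) ^ (1 / p) *
          (∑ k ∈ Finset.range r, ‖dY.proj (G k) y‖ ^ (p / (p - 1))) ^ (1 / (p / (p - 1))) :=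
        Real.inner_le_Lp_mul_Lq_of_nonneg _ hconj (fun _ _ => norm_nonneg _)
          (fun _ _ => norm_nonneg _)
    _ ≤ (cX * ‖x‖) * (cY * ‖y‖) := by
        refine mul_le_mul (hcX F hF x r) ((Real.Lp_le_Lq_of_le _ (fun _ _ => norm_nonneg _)
          (by linarith) hqp').trans (hcY G hG y r)) (by positivity) ?_
        exact (Real.rpow_nonneg (by positivity) _).trans (hcX F hF x r)
    _ = cX * cY * ‖x‖ * ‖y‖ := by ring

lemma exists_bilinear_hasSum {X Y : Type*} [NormedAddCommGroup X] [NormedSpace ℝ X]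
    [NormedAddCommGroup Y] [NormedSpace ℝ Y] {f : ℕ → X →L[ℝ] ℝ} {g : ℕ → Y →L[ℝ] ℝ} {K : ℝ}
    (hK : ∀ x y r, ∑ k ∈ Finset.range r, |f k x| * |g k y| ≤ K * ‖x‖ * ‖y‖) :
    ∃ B : X →L[ℝ] Y →L[ℝ] ℝ, ∀ x y, HasSum (fun k => f k x * g k y) (B x y) := by
  have hnorm : ∀ x y, Summable fun k => ‖f k x * g k y‖ := fun x y =>
    summable_of_sum_range_le (fun _ => norm_nonneg _) (by simpa [abs_mul] using hK x y)
  have hs : ∀ x y, Summable fun k => f k x * g k y := fun x y => (hnorm x y).of_norm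
  let B : X →ₗ[ℝ] Y →ₗ[ℝ] ℝ := LinearMap.mk₂ ℝ (fun x y => ∑' k, f k x * g k y)
    (fun x₁ x₂ y => by simp only [map_add, add_mul]; exact (hs x₁ y).tsum_add (hs x₂ y))
    (fun a x y => by simp only [map_smul, smul_eq_mul, mul_assoc]; exact tsum_mul_left)
    (fun x y₁ y₂ => by simp only [map_add, mul_add]; exact (hs x y₁).tsum_add (hs x y₂))
    (fun a x y => by simp only [map_smul, smul_eq_mul, mul_left_comm _ a]; exact tsum_mul_left)
  refine ⟨B.mkContinuous₂ K fun x y => ?_, fun x y => (hs x y).hasSum⟩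
  calc ‖∑' k, f k x * g k y‖ ≤ ∑' k, ‖f k x * g k y‖ := norm_tsum_le_tsum_norm (hnorm x y)
    _ ≤ K * ‖x‖ * ‖y‖ := Real.tsum_le_of_sum_range_le (fun _ => norm_nonneg _)
        (by simpa [abs_mul] using hK x y)

lemma IsProjTensorProduct.exists_lift {X Y Z : Type*} [NormedAddCommGroup X] [NormedSpace ℝ X]
    [NormedAddCommGroup Y] [NormedSpace ℝ Y] [NormedAddCommGroup Z] [NormedSpace ℝ Z]
    {t : X →L[ℝ] Y →L[ℝ] Z} (ht : IsProjTensorProduct t) (B : X →L[ℝ] Y →L[ℝ] ℝ) :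
    ∃ φ : Z →L[ℝ] ℝ, ∀ x y, φ (t x y) = B x y := by
  have hB : 0 < ‖B‖ + 1 := by positivity
  obtain ⟨φ, -, hφ⟩ := ht.2.2 ((‖B‖ + 1)⁻¹ • B) <| by
    refine (ContinuousLinearMap.opNorm_smul_le _ _).trans ?_
    rw [norm_inv, Real.norm_of_nonneg hB.le, inv_mul_le_iff₀ hB]
    linarith
  refine ⟨(‖B‖ + 1) • φ, fun x y => ?_⟩
  simp [hφ, hB.ne']

section Tensor

variable {X Y Z : Type*} [NormedAddCommGroup X] [NormedSpace ℝ X]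
  [NormedAddCommGroup Y] [NormedSpace ℝ Y] [NormedAddCommGroup Z] [NormedSpace ℝ Z]
  {t : X →L[ℝ] Y →L[ℝ] Z}

lemma CondWeaklyCompact.left_of_tensor
    (hlift : ∀ B : X →L[ℝ] Y →L[ℝ] ℝ, ∃ φ : Z →L[ℝ] ℝ, ∀ x y, φ (t x y) = B x y)
    {W₁ : Set X} {W₂ : Set Y} (hW : CondWeaklyCompact {z | ∃ x ∈ W₁, ∃ y ∈ W₂, z = t x y})
    {y₀ : Y} (hy₀ : y₀ ∈ W₂) (hy₀0 : y₀ ≠ 0) : CondWeaklyCompact W₁ := by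
  obtain ⟨g, hg⟩ := SeparatingDual.exists_eq_one (R := ℝ) hy₀0
  refine hW.of_mapsTo (T := t.flip y₀) (fun f => ?_) fun x hx => ⟨x, hx, y₀, hy₀, rfl⟩
  obtain ⟨φ, hφ⟩ := hlift (f.smulRight g)
  exact ⟨φ, fun x => by simp [hφ, hg]⟩

lemma CondWeaklyCompact.right_of_tensor
    (hlift : ∀ B : X →L[ℝ] Y →L[ℝ] ℝ, ∃ φ : Z →L[ℝ] ℝ, ∀ x y, φ (t x y) = B x y)
    {W₁ : Set X} {W₂ : Set Y} (hW : CondWeaklyCompact {z | ∃ x ∈ W₁, ∃ y ∈ W₂, z = t x y})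
    {x₀ : X} (hx₀ : x₀ ∈ W₁) (hx₀0 : x₀ ≠ 0) : CondWeaklyCompact W₂ := by
  obtain ⟨g, hg⟩ := SeparatingDual.exists_eq_one (R := ℝ) hx₀0
  refine hW.of_mapsTo (T := t x₀) (fun f => ?_) fun y hy => ⟨x₀, hx₀, y, hy, rfl⟩
  obtain ⟨φ, hφ⟩ := hlift (g.smulRight f)
  exact ⟨φ, fun y => by simp [hφ, hg]⟩

end Tensor

lemma norm_sub_le_of_hasSum {E : Type*} [SeminormedAddCommGroup E] {u : ℕ → E} {S : E}
    (hu : HasSum u S) (j : ℕ) {b : ℕ → ℝ} {β : ℝ} (hb : HasSum b β) (hbj : 0 ≤ b j)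
    (hub : ∀ k, k ≠ j → ‖u k‖ ≤ b k) : ‖S - u j‖ ≤ β := by
  have h := (hu.update j 0).norm_le_of_bounded hb fun k => by
    rcases eq_or_ne k j with rfl | hk
    · simpa using hbj
    · simpa [Function.update_of_ne hk] using hub k hk
  rwa [zero_sub, neg_add_eq_sub] at h

lemma not_tendsto_of_abs_sub_neg_one_pow_mul_le {s T : ℕ → ℝ} {δ r L : ℝ}
    (hT : ∀ j, δ ≤ T j) (hs : ∀ j, |s j - (-1) ^ j * T j| ≤ r) (hr : r < δ) :
    ¬Tendsto s atTop (𝓝 L) := by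
  intro hL
  have hgap : ∀ j, 2 * (δ - r) ≤ |s (j + 1) - s j| := fun j => by
    have h₀ := abs_le.1 (hs j)
    have h₁ := abs_le.1 (hs (j + 1))
    rw [pow_succ] at h₁
    rcases neg_one_pow_eq_or ℝ j with h | h <;> rw [h] at h₀ h₁
    · exact le_abs.2 (Or.inr (by linarith [hT j, hT (j + 1)]))
    · exact le_abs.2 (Or.inl (by linarith [hT j, hT (j + 1)]))
  have hstep : Tendsto (fun j => s (j + 1) - s j) atTop (𝓝 0) := by
    simpa using (hL.comp (tendsto_add_atTop_nat 1)).sub hL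
  obtain ⟨j, hj⟩ := ((tendsto_zero_iff_norm_tendsto_zero.1 hstep).eventually_lt_const
    (by linarith : 0 < 2 * (δ - r))).exists
  exact (hgap j).not_gt hj

lemma not_isWeaklyCauchy_of_isGlidingHump {p q : ℝ} (hp : 1 < p) (hq : 1 < q)
    (hpq : 1 ≤ 1 / p + 1 / q) {I J X Y Z : Type*} [NormedAddCommGroup X] [NormedSpace ℝ X]
    [NormedAddCommGroup Y] [NormedSpace ℝ Y] [NormedAddCommGroup Z] [NormedSpace ℝ Z]
    {dX : SchauderDecomp I X} {dY : SchauderDecomp J Y}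
    (hpX : dX.DisjLowerEstimate p) (hqY : dY.DisjLowerEstimate q) {t : X →L[ℝ] Y →L[ℝ] Z}
    (hlift : ∀ B : X →L[ℝ] Y →L[ℝ] ℝ, ∃ φ : Z →L[ℝ] ℝ, ∀ x y, φ (t x y) = B x y)
    {ε₁ ε₂ η : ℝ} (hε₁ : 0 ≤ ε₁) (hε₂ : 0 ≤ ε₂) (hη : η ^ 2 * (4 / 3) < ε₁ * ε₂)
    {D : ℕ → X} {E : ℕ → Y} {F : ℕ → Finset I} {G : ℕ → Finset J}
    {f : ℕ → X →L[ℝ] ℝ} {g : ℕ → Y →L[ℝ] ℝ}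
    (hD : dX.IsGlidingHump ε₁ η D F f) (hE : dY.IsGlidingHump ε₂ η E G g) :
    ¬IsWeaklyCauchy fun n => t (D n) (E n) := by
  intro hDE
  obtain ⟨K, hK⟩ := exists_sum_range_norm_proj_mul_le hp hq hpq hpX hqY
  obtain ⟨B, hB⟩ := exists_bilinear_hasSum (f := fun k => (-1) ^ k • f k) (g := g) (K := K)
    fun x y r => (Finset.sum_le_sum fun k _ => by
      simpa [abs_mul] using mul_le_mul (hD.abs_apply_le k x) (hE.abs_apply_le k y)
        (abs_nonneg _) (norm_nonneg _)).trans
      (hK F G hD.pairwise_disjoint hE.pairwise_disjoint x y r)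
  obtain ⟨φ, hφ⟩ := hlift B
  obtain ⟨L, hL⟩ := hDE φ
  have hgeom := (hasSum_geometric_of_lt_one (r := (1 / 4 : ℝ)) (by norm_num)
    (by norm_num)).mul_left (η ^ 2)
  rw [show (1 - 1 / 4 : ℝ)⁻¹ = 4 / 3 by norm_num] at hgeom
  refine not_tendsto_of_abs_sub_neg_one_pow_mul_le (T := fun j => f j (D j) * g j (E j))
    (fun j => mul_le_mul (hD.le_apply_self j) (hE.le_apply_self j) hε₂
      (hε₁.trans (hD.le_apply_self j))) (fun j => ?_) hη (hL.congr fun n => hφ _ _)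
  have h := norm_sub_le_of_hasSum (hB (D j) (E j)) j hgeom (by positivity) fun k hk => by
    have hf := hD.abs_apply_le_of_ne j k hk.symm
    have hg := hE.abs_apply_le_of_ne j k hk.symm
    calc ‖(-1) ^ k • f k (D j) * g k (E j)‖ = |f k (D j)| * |g k (E j)| := by simp
      _ ≤ η / 2 ^ k * (η / 2 ^ k) := mul_le_mul hf hg (abs_nonneg _) ((abs_nonneg _).trans hf)
      _ = η ^ 2 * (1 / 4) ^ k := by
        rw [div_mul_div_comm, ← mul_pow, ← sq, one_div, inv_pow, div_eq_mul_inv]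
        norm_num
  simpa [mul_assoc] using h

lemma apply_sub_apply_sub_mem {X Y Z : Type*} [NormedAddCommGroup X] [NormedSpace ℝ X]
    [NormedAddCommGroup Y] [NormedSpace ℝ Y] [NormedAddCommGroup Z] [NormedSpace ℝ Z]
    (t : X →L[ℝ] Y →L[ℝ] Z) {W₁ : Set X} {W₂ : Set Y} {S : Set Z}
    (hS : ∀ x ∈ W₁, ∀ y ∈ W₂, t x y ∈ S) {x x' : X} {y y' : Y} (hx : x ∈ W₁)
    (hx' : x' ∈ W₁) (hy : y ∈ W₂) (hy' : y' ∈ W₂) :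
    t (x - x') (y - y') ∈ S - S - S + S := by
  have h : t (x - x') (y - y') = t x y - t x y' - t x' y + t x' y' := by
    simp only [map_sub, sub_apply]
    abel
  rw [h]
  exact Set.add_mem_add (Set.sub_mem_sub (Set.sub_mem_sub (hS x hx y hy) (hS x hx y' hy'))
    (hS x' hx' y hy)) (hS x' hx' y' hy')

theorem statement15_general {p q : ℝ} (hp : 1 < p) (hq : 1 < q) (hpq : 1 ≤ 1 / p + 1 / q)
    {I J X Y Z : Type*}
    [NormedAddCommGroup X] [NormedSpace ℝ X] [CompleteSpace X]
    [NormedAddCommGroup Y] [NormedSpace ℝ Y] [CompleteSpace Y]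
    [NormedAddCommGroup Z] [NormedSpace ℝ Z]
    (dX : SchauderDecomp I X) (dY : SchauderDecomp J Y)
    (hfdX : dX.FinDim) (hfdY : dY.FinDim)
    (hpX : dX.DisjLowerEstimate p) (hqY : dY.DisjLowerEstimate q)
    (t : X →L[ℝ] Y →L[ℝ] Z) (ht : IsProjTensorProduct t)
    (W₁ : Set X) (W₂ : Set Y)
    (hW : CondWeaklyCompact {z : Z | ∃ x ∈ W₁, ∃ y ∈ W₂, z = t x y}) :
    IsCompact (closure W₁) ∨ IsCompact (closure W₂) := by
  have hlift := ht.exists_lift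
  by_contra! hW₁₂
  have hTB₁ : ¬TotallyBounded W₁ := fun h =>
    hW₁₂.1 (h.closure.isCompact_of_isClosed isClosed_closure)
  have hTB₂ : ¬TotallyBounded W₂ := fun h =>
    hW₁₂.2 (h.closure.isCompact_of_isClosed isClosed_closure)
  obtain ⟨x₀, hx₀, hx₀0⟩ := exists_mem_ne_of_not_totallyBounded hTB₁ 0
  obtain ⟨y₀, hy₀, hy₀0⟩ := exists_mem_ne_of_not_totallyBounded hTB₂ 0
  obtain ⟨ε₁, hε₁, a, haW, ha, haε⟩ :=
    (hW.left_of_tensor hlift hy₀ hy₀0).exists_isWeaklyCauchy_le_norm_sub_succ hTB₁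
  obtain ⟨ε₂, hε₂, b, hbW, hb, hbε⟩ :=
    (hW.right_of_tensor hlift hx₀ hx₀0).exists_isWeaklyCauchy_le_norm_sub_succ hTB₂
  obtain ⟨η, hη, hηε⟩ : ∃ η > 0, η ^ 2 * (4 / 3) < ε₁ / 2 * (ε₂ / 2) :=
    ⟨min 1 (ε₁ * ε₂ / 8), by positivity, by
      nlinarith [min_le_left 1 (ε₁ * ε₂ / 8), min_le_right 1 (ε₁ * ε₂ / 8),
        (by positivity : 0 < min 1 (ε₁ * ε₂ / 8)), mul_pos hε₁ hε₂]⟩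
  obtain ⟨σ, F, f, hF⟩ := dX.exists_isGlidingHump hfdX ha.tendsto_sub_succ hε₁ haε hη
  obtain ⟨τ, G, g, hG⟩ := dY.exists_isGlidingHump hfdY hb.tendsto_sub_succ hε₂ hbε hη
  obtain ⟨ψ, hψ, hz⟩ := ((hW.sub hW).sub hW).add hW
    (fun n => t (a (σ n + 1) - a (σ n)) (b (τ n + 1) - b (τ n)))
    fun n => apply_sub_apply_sub_mem t (S := {z | ∃ x ∈ W₁, ∃ y ∈ W₂, z = t x y})
      (fun x hx y hy => ⟨x, hx, y, hy, rfl⟩) (haW _) (haW _) (hbW _) (hbW _)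
  exact not_isWeaklyCauchy_of_isGlidingHump hp hq hpq hpX hqY hlift (by positivity)
    (by positivity) hηε (hF.comp hη.le hψ) (hG.comp hη.le hψ) hz

/-- if `W₁ ⊗ W₂` is conditionally weakly compact in `X ⊗π Y`, then `W₁` or `W₂`
is relatively norm compact. -/
theorem statement15 {p q : ℝ} (hp : 1 < p) (hq : 1 < q) (hpq : 1 ≤ 1 / p + 1 / q)
    {I J X Y Z : Type*}
    [NormedAddCommGroup X] [NormedSpace ℝ X] [CompleteSpace X]
    [NormedAddCommGroup Y] [NormedSpace ℝ Y] [CompleteSpace Y]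
    [NormedAddCommGroup Z] [NormedSpace ℝ Z] [CompleteSpace Z]
    (dX : SchauderDecomp I X) (dY : SchauderDecomp J Y)
    (hfdX : dX.FinDim) (hfdY : dY.FinDim)
    (hpX : dX.DisjLowerEstimate p) (hqY : dY.DisjLowerEstimate q)
    (t : X →L[ℝ] Y →L[ℝ] Z) (ht : IsProjTensorProduct t)
    (W₁ : Set X) (W₂ : Set Y)
    (hW : CondWeaklyCompact {z : Z | ∃ x ∈ W₁, ∃ y ∈ W₂, z = t x y}) :
    IsCompact (closure W₁) ∨ IsCompact (closure W₂) :=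
  statement15_general hp hq hpq dX dY hfdX hfdY hpX hqY t ht W₁ W₂ hW
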